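/- Let 𝒯 be a well-founded B-tree and suppose for each t ∈ 𝒯 the set ℰ_t(𝒯) = {s ∈ MAX(𝒯) : t ⪯ s} is covered as ℰ_t(𝒯) = 𝒞⁰_t ∪ 𝒞¹_t. Then for j ∈ {0,1} there exist ordinals ξ_j with ξ_0 ⊕ ξ_1 = o(𝒯) (Hessenberg sum) and extended order preserving maps (i_j, e_j) : 𝒯_{ξ_j} → 𝒯 such that for every maximal t ∈ 𝒯_{ξ_j}, e_j(t) ∈ ⋂_{k=1}^{|t|} 𝒞^j_{i_j(t|_k)}. -/

import Mathlib

/-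
Induction on `μ = o(T)`. For `δ < μ` pick a root `[a]` of `T` that survives `δ` derivations; the
cone above it has an order `ρ` with `δ ≤ ρ < μ`. Split the cone according to the colour, at `[a]`,
of the branches through each node. Derivation commutes with unions of `B`-trees, so one colour class
`j₀` still has order `ρ`. The induction hypothesis, applied to that class with the colouring read
off one level up in `T`, gives maps of `𝒯_(y 0)` and `𝒯_(y 1)` with `y 0 ♯ y 1 = ρ`; since every
branch of the class has colour `j₀` at `[a]`, putting `[a]` below the `j₀`-map raises its height by
one. Hence sums `> δ` are attained for every `δ < μ`, and as the heights admitting a monochromatic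
map are closed downwards and under limits, `μ` itself is attained.
-/

open Ordinal

/-- `s` is a proper initial segment of `t`. -/
def ProperPrefix {S : Type*} (s t : List S) : Prop := s <+: t ∧ s ≠ t

/-- The maximal elements of a set of finite sequences with respect to the
proper-initial-segment order. -/
def maxElems {S : Type*} (T : Set (List S)) : Set (List S) :=
  {t ∈ T | ¬ ∃ u ∈ T, ProperPrefix t u}

/-- The derived tree: remove the maximal elements. -/
def derivTree {S : Type*} (T : Set (List S)) : Set (List S) :=
  {t ∈ T | ∃ u ∈ T, ProperPrefix t u}

/-- Transfinite iterates of the derivation: `d^0 T = T`, `d^(ξ+1) T = (d^ξ T)'`,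
and intersections at limit stages. -/
noncomputable def derivIter {S : Type*} (T : Set (List S)) (ξ : Ordinal) : Set (List S) :=
  Ordinal.limitRecOn ξ T (fun _ ih => derivTree ih)
    (fun o _ ih => ⋂ (ζ : Set.Iio o), ih ζ.1 ζ.2)

/-- A tree on `S`: a set of finite sequences closed under initial segments. -/
def IsTree {S : Type*} (T : Set (List S)) : Prop :=
  ∀ ⦃s t : List S⦄, s <+: t → t ∈ T → s ∈ T

/-- A `B`-tree on `S`: a set of nonempty finite sequences which becomes a tree
after adjoining the empty sequence. -/
def IsBTree {S : Type*} (T : Set (List S)) : Prop :=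
  [] ∉ T ∧ ∀ ⦃s t : List S⦄, s ≠ [] → s <+: t → t ∈ T → s ∈ T

/-- `T` has order exactly `ξ`: `ξ` is the least ordinal whose derived tree is empty. -/
def hasOrder {S : Type*} (T : Set (List S)) (ξ : Ordinal) : Prop :=
  derivIter T ξ = ∅ ∧ ∀ ζ < ξ, derivIter T ζ ≠ ∅

/-- The minimal trees: `𝒯_0 = ∅`, `𝒯_(ξ+1) = {(ξ+1)} ∪ {(ξ+1)⌢t : t ∈ 𝒯_ξ}`,
and `𝒯_λ = ⋃_(ζ<λ) 𝒯_(ζ+1)` at limits. -/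
noncomputable def minTree (ξ : Ordinal) : Set (List Ordinal) :=
  Ordinal.limitRecOn ξ ∅
    (fun ζ ih => {l : List Ordinal | l = [Order.succ ζ] ∨ ∃ t ∈ ih, l = Order.succ ζ :: t})
    (fun o ho ih => ⋃ (ζ : Set.Iio o), ih (Order.succ ζ.1) (ho.succ_lt ζ.2))

universe u

/-- Natural (Hessenberg) sum of ordinals, as formerly in Mathlib's `Ordinal.nadd`. -/
noncomputable def Ordinal.nadd (a b : Ordinal.{u}) : Ordinal.{u} :=
  max (⨆ x : Set.Iio a, Order.succ (Ordinal.nadd x.1 b))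
    (⨆ x : Set.Iio b, Order.succ (Ordinal.nadd a x.1))
termination_by (a, b)
decreasing_by
  · exact Prod.Lex.left _ _ x.2
  · exact Prod.Lex.right _ x.2

infixl:65 " ♯ " => Ordinal.nadd

namespace Ordinal

@[elab_as_elim]
theorem succ_limit_induction {motive : Ordinal → Prop} (o : Ordinal) (zero : motive 0)
    (succ : ∀ o, motive o → motive (Order.succ o))
    (limit : ∀ o, Order.IsSuccLimit o → (∀ o' < o, motive o') → motive o) : motive o :=
  limitRecOn o zero (fun o h => Order.succ_eq_add_one o ▸ succ o h) limit

theorem lt_nadd_iff {a b c : Ordinal.{u}} :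
    a < b ♯ c ↔ (∃ b' < b, a ≤ b' ♯ c) ∨ ∃ c' < c, a ≤ b ♯ c' := by
  rw [nadd, lt_max_iff, Ordinal.lt_iSup_iff, Ordinal.lt_iSup_iff]
  simp only [Order.lt_succ_iff, Subtype.exists, Set.mem_Iio, exists_prop]

theorem nadd_le_iff {a b c : Ordinal.{u}} :
    b ♯ c ≤ a ↔ (∀ b' < b, b' ♯ c < a) ∧ ∀ c' < c, b ♯ c' < a := by
  rw [nadd, max_le_iff, Ordinal.iSup_le_iff, Ordinal.iSup_le_iff]
  simp only [Order.succ_le_iff, Subtype.forall, Set.mem_Iio]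

theorem nadd_comm (a b : Ordinal.{u}) : a ♯ b = b ♯ a := by
  induction a using WellFoundedLT.induction generalizing b with | ind a iha =>
  induction b using WellFoundedLT.induction with | ind b ihb =>
  rw [nadd, nadd, max_comm]
  congr 1 <;> congr! 2 with x
  exacts [congrArg _ (ihb x.1 x.2), congrArg _ (iha x.1 x.2 b)]

theorem nadd_lt_nadd_left {b c : Ordinal.{u}} (h : b < c) (a : Ordinal.{u}) : a ♯ b < a ♯ c :=
  lt_nadd_iff.2 (Or.inr ⟨b, h, le_rfl⟩)

theorem nadd_lt_nadd_right {b c : Ordinal.{u}} (h : b < c) (a : Ordinal.{u}) : b ♯ a < c ♯ a :=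
  lt_nadd_iff.2 (Or.inl ⟨b, h, le_rfl⟩)

theorem nadd_le_nadd {a b c d : Ordinal.{u}} (hab : a ≤ b) (hcd : c ≤ d) : a ♯ c ≤ b ♯ d := by
  have hleft : ∀ x : Ordinal.{u}, x ♯ c ≤ x ♯ d := fun x =>
    hcd.eq_or_lt.elim (fun h => h ▸ le_rfl) fun h => (nadd_lt_nadd_left h x).le
  exact hab.eq_or_lt.elim (fun h => h ▸ hleft a) fun h =>
    (nadd_lt_nadd_right h c).le.trans (hleft b)

theorem le_nadd_self (a b : Ordinal.{u}) : a ≤ a ♯ b := by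
  induction a using WellFoundedLT.induction with | ind a ih =>
  exact le_of_forall_lt fun c hc => (ih c hc).trans_lt (nadd_lt_nadd_right hc b)

theorem succ_nadd (a b : Ordinal.{u}) : Order.succ a ♯ b = Order.succ (a ♯ b) := by
  induction b using WellFoundedLT.induction with | ind b ih =>
  refine le_antisymm (nadd_le_iff.2 ⟨fun a' ha' => ?_, fun b' hb' => ?_⟩)
    (Order.succ_le_of_lt (nadd_lt_nadd_right (Order.lt_succ a) b))
  · exact Order.lt_succ_iff.2 (nadd_le_nadd (Order.lt_succ_iff.1 ha') le_rfl)
  · exact (ih b' hb').trans_lt (Order.succ_lt_succ (nadd_lt_nadd_left hb' a))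

theorem nadd_succ (a b : Ordinal.{u}) : a ♯ Order.succ b = Order.succ (a ♯ b) := by
  rw [nadd_comm, succ_nadd, nadd_comm]

theorem exists_nadd_eq_of_le {a b c : Ordinal.{u}} (h : c ≤ a ♯ b) :
    ∃ a' ≤ a, ∃ b' ≤ b, a' ♯ b' = c := by
  induction a using WellFoundedLT.induction generalizing b c with | ind a iha =>
  induction b using WellFoundedLT.induction generalizing c with | ind b ihb =>
  obtain rfl | hlt := h.eq_or_lt
  · exact ⟨a, le_rfl, b, le_rfl, rfl⟩
  obtain ⟨a', ha', hle⟩ | ⟨b', hb', hle⟩ := lt_nadd_iff.1 hlt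
  · obtain ⟨a'', ha'', b'', hb'', rfl⟩ := iha a' ha' hle
    exact ⟨a'', ha''.trans ha'.le, b'', hb'', rfl⟩
  · obtain ⟨a'', ha'', b'', hb'', rfl⟩ := ihb b' hb' hle
    exact ⟨a'', ha'', b'', hb''.trans hb'.le, rfl⟩

theorem exists_nadd_eq_of_forall_lt {P : Fin 2 → Ordinal.{u} → Prop}
    (hP : ∀ j ξ, (∀ ζ < ξ, ∃ ρ, ζ < ρ ∧ P j ρ) → P j ξ) {μ : Ordinal.{u}}
    (h : ∀ δ < μ, ∃ x : Fin 2 → Ordinal.{u}, (∀ j, P j (x j)) ∧ δ < x 0 ♯ x 1 ∧ x 0 ♯ x 1 ≤ μ) :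
    ∃ x : Fin 2 → Ordinal.{u}, x 0 ♯ x 1 = μ ∧ ∀ j, P j (x j) := by
  have hdown : ∀ j ξ ρ, P j ρ → ξ ≤ ρ → P j ξ :=
    fun j ξ ρ hρ hξ => hP j ξ fun ζ hζ => ⟨ρ, hζ.trans_le hξ, hρ⟩
  set X : Fin 2 → Ordinal.{u} := fun j => sSup {ξ | P j ξ ∧ ξ ≤ μ}
  have hbdd : ∀ j, BddAbove {ξ | P j ξ ∧ ξ ≤ μ} := fun j => ⟨μ, fun _ h => h.2⟩
  have hX : ∀ j, P j (X j) := fun j => hP j _ fun ζ hζ => by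
    obtain ⟨ρ, hρ, hζρ⟩ :=
      exists_lt_of_lt_csSup (s := {ξ | P j ξ ∧ ξ ≤ μ})
        ⟨0, hP j 0 fun _ h => absurd h (not_lt_zero), zero_le⟩ hζ
    exact ⟨ρ, hζρ, hρ.1⟩
  have hμ : μ ≤ X 0 ♯ X 1 := le_of_forall_lt fun δ hδ => by
    obtain ⟨x, hx, hδx, hxμ⟩ := h δ hδ
    refine hδx.trans_le (nadd_le_nadd (le_csSup (hbdd 0) ⟨hx 0, ?_⟩) (le_csSup (hbdd 1) ⟨hx 1, ?_⟩))
    · exact (le_nadd_self _ _).trans hxμ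
    · exact ((le_nadd_self _ _).trans_eq (nadd_comm _ _)).trans hxμ
  obtain ⟨a, ha, b, hb, hab⟩ := exists_nadd_eq_of_le hμ
  exact ⟨![a, b], hab, Fin.forall_fin_two.2 ⟨hdown 0 a _ (hX 0) ha, hdown 1 b _ (hX 1) hb⟩⟩

end Ordinal

section Trees

variable {S : Type*}

theorem List.IsPrefix.headI_eq [Inhabited S] {s t : List S} (h : s <+: t) (hs : s ≠ []) :
    s.headI = t.headI := by
  obtain ⟨u, rfl⟩ := h
  obtain ⟨a, s, rfl⟩ := List.exists_cons_of_ne_nil hs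
  rfl

theorem mem_maxElems_of_subset {U T : Set (List S)} (hUT : U ⊆ T) {t : List S} (ht : t ∈ U)
    (h : t ∈ maxElems T) : t ∈ maxElems U :=
  ⟨ht, fun ⟨u, hu, htu⟩ => h.2 ⟨u, hUT hu, htu⟩⟩

theorem ProperPrefix.length_lt {s t : List S} (h : ProperPrefix s t) : s.length < t.length :=
  h.1.length_le.lt_of_ne fun hl => h.2 (h.1.eq_of_length hl)

theorem ProperPrefix.ne_nil {s t : List S} (h : ProperPrefix s t) : t ≠ [] := by
  rintro rfl
  exact h.2 (List.prefix_nil.1 h.1)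

theorem List.IsPrefix.trans_properPrefix {s t u : List S} (h : s <+: t) (h' : ProperPrefix t u) :
    ProperPrefix s u :=
  ⟨h.trans h'.1, fun e => (h.length_le.trans_lt h'.length_lt).ne (congrArg List.length e)⟩

theorem nil_properPrefix_iff {s : List S} : ProperPrefix [] s ↔ s ≠ [] := by
  simp [ProperPrefix, eq_comm]

theorem properPrefix_cons_cons {a : S} {s t : List S} :
    ProperPrefix (a :: s) (a :: t) ↔ ProperPrefix s t := by
  simp [ProperPrefix]

theorem cons_properPrefix_iff {a : S} {s u : List S} :
    ProperPrefix (a :: s) u ↔ ∃ u', u = a :: u' ∧ ProperPrefix s u' := by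
  constructor
  · rintro h
    obtain ⟨u', rfl, -⟩ := List.cons_prefix_iff.1 h.1
    exact ⟨u', rfl, properPrefix_cons_cons.1 h⟩
  · rintro ⟨u', rfl, h⟩
    exact properPrefix_cons_cons.2 h

theorem IsBTree.ne_nil {T : Set (List S)} (hT : IsBTree T) {t : List S} (ht : t ∈ T) : t ≠ [] := by
  rintro rfl
  exact hT.1 ht

theorem IsBTree.derivTree {T : Set (List S)} (hT : IsBTree T) : IsBTree (derivTree T) :=
  ⟨fun h => hT.1 h.1, fun _ _ hs hst ⟨ht, u, hu, htu⟩ =>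
    ⟨hT.2 hs hst ht, u, hu, hst.trans_properPrefix htu⟩⟩

theorem derivTree_union {A B : Set (List S)} (hA : IsBTree A) (hB : IsBTree B) :
    derivTree (A ∪ B) = derivTree A ∪ derivTree B := by
  ext t
  constructor
  · rintro ⟨ht, u, hu | hu, htu⟩
    · exact Or.inl ⟨hA.2 (ht.elim hA.ne_nil hB.ne_nil) htu.1 hu, u, hu, htu⟩
    · exact Or.inr ⟨hB.2 (ht.elim hA.ne_nil hB.ne_nil) htu.1 hu, u, hu, htu⟩
  · rintro (⟨ht, u, hu, htu⟩ | ⟨ht, u, hu, htu⟩)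
    exacts [⟨Or.inl ht, u, Or.inl hu, htu⟩, ⟨Or.inr ht, u, Or.inr hu, htu⟩]

theorem derivIter_zero (T : Set (List S)) : derivIter T 0 = T :=
  Ordinal.limitRecOn_zero ..

theorem derivIter_succ (T : Set (List S)) (ξ : Ordinal) :
    derivIter T (Order.succ ξ) = derivTree (derivIter T ξ) :=
  Ordinal.limitRecOn_add_one ..

theorem mem_derivIter_limit (T : Set (List S)) {ξ : Ordinal} (hξ : Order.IsSuccLimit ξ)
    {t : List S} : t ∈ derivIter T ξ ↔ ∀ ζ < ξ, t ∈ derivIter T ζ := by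
  rw [derivIter, Ordinal.limitRecOn_limit _ _ _ _ hξ]
  simp only [Set.mem_iInter, Subtype.forall, Set.mem_Iio]
  rfl

theorem derivIter_antitone (T : Set (List S)) : Antitone (derivIter T) := by
  intro ζ ξ h
  induction ξ using Ordinal.succ_limit_induction with
  | zero => rw [nonpos_iff_eq_zero.1 h]
  | succ ξ ih =>
    obtain rfl | h := Order.le_succ_iff_eq_or_le.1 h
    · exact le_rfl
    · rw [derivIter_succ]
      exact fun t ht => ih h ht.1
  | limit ξ hξ ih =>
    obtain rfl | h := h.eq_or_lt
    · exact le_rfl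
    · exact fun t ht => (mem_derivIter_limit T hξ).1 ht ζ h

theorem derivIter_subset (T : Set (List S)) (ξ : Ordinal) : derivIter T ξ ⊆ T :=
  fun _ ht => derivIter_zero T ▸ derivIter_antitone T zero_le ht

theorem IsBTree.derivIter {T : Set (List S)} (hT : IsBTree T) (ξ : Ordinal) :
    IsBTree (derivIter T ξ) := by
  induction ξ using Ordinal.succ_limit_induction with
  | zero => rwa [derivIter_zero]
  | succ ξ ih => rw [derivIter_succ]; exact ih.derivTree
  | limit ξ hξ ih =>
    refine ⟨fun h => hT.1 (derivIter_subset T ξ h), fun s t hs hst ht => ?_⟩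
    rw [mem_derivIter_limit T hξ] at ht ⊢
    exact fun ζ hζ => (ih ζ hζ).2 hs hst (ht ζ hζ)

theorem derivIter_union {A B : Set (List S)} (hA : IsBTree A) (hB : IsBTree B) (ξ : Ordinal) :
    derivIter (A ∪ B) ξ = derivIter A ξ ∪ derivIter B ξ := by
  induction ξ using Ordinal.succ_limit_induction with
  | zero => simp only [derivIter_zero]
  | succ ξ ih =>
    rw [derivIter_succ, ih, derivTree_union (hA.derivIter ξ) (hB.derivIter ξ), derivIter_succ,
      derivIter_succ]
  | limit ξ hξ ih =>
    ext t
    simp only [Set.mem_union, mem_derivIter_limit _ hξ]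
    refine ⟨fun h => ?_, fun h ζ hζ => ?_⟩
    · by_contra! hAB
      obtain ⟨⟨ζ₁, hζ₁, hA₁⟩, ζ₂, hζ₂, hB₂⟩ := hAB
      -- both families decrease, so `t` would leave `A ∪ B` at stage `max ζ₁ ζ₂`
      have := h _ (max_lt hζ₁ hζ₂)
      rw [ih _ (max_lt hζ₁ hζ₂)] at this
      exact this.elim (fun h' => hA₁ (derivIter_antitone A (le_max_left _ _) h'))
        fun h' => hB₂ (derivIter_antitone B (le_max_right _ _) h')
    · rw [ih ζ hζ]
      exact h.imp (· ζ hζ) (· ζ hζ)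

theorem hasOrder_or_of_union {A B : Set (List S)} (hA : IsBTree A) (hB : IsBTree B) {ρ : Ordinal}
    (h : hasOrder (A ∪ B) ρ) : hasOrder A ρ ∨ hasOrder B ρ := by
  obtain ⟨hρ, hlt⟩ := h
  rw [derivIter_union hA hB, Set.union_empty_iff] at hρ
  by_cases hA' : ∀ ζ < ρ, derivIter A ζ ≠ ∅
  · exact Or.inl ⟨hρ.1, hA'⟩
  refine Or.inr ⟨hρ.2, fun ζ hζ hBζ => ?_⟩
  push Not at hA'
  obtain ⟨ζ', hζ', hAζ'⟩ := hA'
  apply hlt _ (max_lt hζ hζ')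
  rw [derivIter_union hA hB, Set.union_empty_iff]
  exact ⟨Set.subset_eq_empty (derivIter_antitone A (le_max_right _ _)) hAζ',
    Set.subset_eq_empty (derivIter_antitone B (le_max_left _ _)) hBζ⟩

theorem exists_hasOrder {T : Set (List S)} {μ : Ordinal} (h : derivIter T μ = ∅) :
    ∃ ρ ≤ μ, hasOrder T ρ :=
  ⟨sInf {ξ | derivIter T ξ = ∅}, csInf_le' h, csInf_mem (s := {ξ | derivIter T ξ = ∅}) ⟨μ, h⟩,
    fun _ hζ => notMem_of_lt_csInf' (s := {ξ | derivIter T ξ = ∅}) hζ⟩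

theorem exists_maxElems_prefix_of_notMem_derivIter {T : Set (List S)} {t : List S} (ht : t ∈ T)
    {ξ : Ordinal} (hξ : t ∉ derivIter T ξ) : ∃ w ∈ maxElems T, t <+: w := by
  induction ξ using Ordinal.succ_limit_induction generalizing t with
  | zero => exact absurd ((derivIter_zero T).symm ▸ ht) hξ
  | succ ξ ih =>
    by_cases htξ : t ∈ derivIter T ξ
    · by_cases hext : ∃ u ∈ T, ProperPrefix t u
      · obtain ⟨u, hu, htu⟩ := hext
        have huξ : u ∉ derivIter T ξ := fun huξ =>
          hξ ((derivIter_succ T ξ).symm ▸ ⟨htξ, u, huξ, htu⟩)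
        obtain ⟨w, hw, huw⟩ := ih hu huξ
        exact ⟨w, hw, htu.1.trans huw⟩
      · exact ⟨t, ⟨ht, hext⟩, List.prefix_refl t⟩
    · exact ih ht htξ
  | limit ξ hlim ih =>
    rw [mem_derivIter_limit T hlim] at hξ
    push Not at hξ
    obtain ⟨ζ, hζ, htζ⟩ := hξ
    exact ih ζ hζ ht htζ

theorem exists_maxElems_prefix {T : Set (List S)} {μ : Ordinal} (hμ : derivIter T μ = ∅)
    {t : List S} (ht : t ∈ T) : ∃ w ∈ maxElems T, t <+: w :=
  exists_maxElems_prefix_of_notMem_derivIter ht (hμ ▸ Set.notMem_empty t)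

end Trees

section Cones

variable {S : Type*}

def cone (T : Set (List S)) (a : S) : Set (List S) := {s | s ≠ [] ∧ a :: s ∈ T}

theorem IsBTree.cone {T : Set (List S)} (hT : IsBTree T) (a : S) : IsBTree (cone T a) :=
  ⟨fun h => h.1 rfl, fun _ _ hs hst ht =>
    ⟨hs, hT.2 (List.cons_ne_nil _ _) (List.cons_prefix_cons.2 ⟨rfl, hst⟩) ht.2⟩⟩

theorem exists_cons_properPrefix_iff {T : Set (List S)} {a : S} {s : List S} :
    (∃ u ∈ T, ProperPrefix (a :: s) u) ↔ ∃ u ∈ cone T a, ProperPrefix s u := by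
  constructor
  · rintro ⟨u, hu, h⟩
    obtain ⟨u', rfl, h'⟩ := cons_properPrefix_iff.1 h
    exact ⟨u', ⟨h'.ne_nil, hu⟩, h'⟩
  · rintro ⟨u, ⟨-, hu⟩, h⟩
    exact ⟨a :: u, hu, properPrefix_cons_cons.2 h⟩

theorem exists_singleton_properPrefix_iff {T : Set (List S)} {a : S} :
    (∃ u ∈ T, ProperPrefix [a] u) ↔ (cone T a).Nonempty := by
  rw [exists_cons_properPrefix_iff]
  exact ⟨fun ⟨u, hu, _⟩ => ⟨u, hu⟩, fun ⟨u, hu⟩ => ⟨u, hu, nil_properPrefix_iff.2 hu.1⟩⟩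

theorem cons_mem_maxElems_iff {T : Set (List S)} {a : S} {m : List S} (hm : m ≠ []) :
    a :: m ∈ maxElems T ↔ m ∈ maxElems (cone T a) := by
  change (a :: m ∈ T ∧ _) ↔ (m ≠ [] ∧ a :: m ∈ T) ∧ _
  rw [exists_cons_properPrefix_iff]
  simp only [hm, ne_eq, not_false_eq_true, true_and]

theorem derivTree_cone (T : Set (List S)) (a : S) :
    derivTree (cone T a) = cone (derivTree T) a := by
  ext s
  change (s ∈ cone T a ∧ ∃ u ∈ cone T a, ProperPrefix s u) ↔
    s ≠ [] ∧ a :: s ∈ T ∧ ∃ u ∈ T, ProperPrefix (a :: s) u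
  rw [← exists_cons_properPrefix_iff]
  exact and_assoc

theorem derivIter_cone (T : Set (List S)) (a : S) (ξ : Ordinal) :
    derivIter (cone T a) ξ = cone (derivIter T ξ) a := by
  induction ξ using Ordinal.succ_limit_induction with
  | zero => simp only [derivIter_zero]
  | succ ξ ih => rw [derivIter_succ, derivIter_succ, ih, derivTree_cone]
  | limit ξ hξ ih =>
    ext s
    have hζ : ∀ ζ < ξ, s ∈ derivIter (cone T a) ζ ↔ s ≠ [] ∧ a :: s ∈ derivIter T ζ :=
      fun ζ hζ => by rw [ih ζ hζ]; rfl
    change _ ↔ s ≠ [] ∧ _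
    rw [mem_derivIter_limit _ hξ, forall₂_congr hζ, mem_derivIter_limit _ hξ]
    exact ⟨fun h => ⟨(h 0 hξ.bot_lt).1, fun ζ hζ => (h ζ hζ).2⟩, fun h ζ hζ => ⟨h.1, h.2 ζ hζ⟩⟩

theorem singleton_mem_derivIter_iff {T : Set (List S)} {a : S} (ha : [a] ∈ T) (τ : Ordinal) :
    [a] ∈ derivIter T τ ↔ ∀ κ < τ, (derivIter (cone T a) κ).Nonempty := by
  induction τ using Ordinal.succ_limit_induction with
  | zero => simp [derivIter_zero, ha]
  | succ τ ih =>
    rw [derivIter_succ, derivTree, Set.mem_ofPred_eq, exists_singleton_properPrefix_iff, ih,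
      ← derivIter_cone]
    simp only [Order.lt_succ_iff, le_iff_lt_or_eq, or_imp, forall_and, forall_eq]
  | limit τ hτ ih =>
    rw [mem_derivIter_limit _ hτ]
    refine ⟨fun h κ hκ => ?_, fun h ζ hζ => (ih ζ hζ).2 fun κ hκ => h κ (hκ.trans hζ)⟩
    exact (ih _ (hτ.succ_lt hκ)).1 (h _ (hτ.succ_lt hκ)) κ (Order.lt_succ κ)

theorem exists_root_hasOrder_cone {T : Set (List S)} (hT : IsBTree T) {μ δ : Ordinal}
    (hμ : hasOrder T μ) (hδ : δ < μ) :
    ∃ a, [a] ∈ T ∧ ∃ ρ, δ ≤ ρ ∧ ρ < μ ∧ hasOrder (cone T a) ρ := by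
  obtain ⟨t, ht⟩ := Set.nonempty_iff_ne_empty.2 (hμ.2 δ hδ)
  obtain ⟨a, s, rfl⟩ := List.exists_cons_of_ne_nil ((hT.derivIter δ).ne_nil ht)
  have haδ : [a] ∈ derivIter T δ :=
    (hT.derivIter δ).2 (List.cons_ne_nil _ _) (List.cons_prefix_cons.2 ⟨rfl, List.nil_prefix⟩) ht
  have ha : [a] ∈ T := derivIter_subset T δ haδ
  have haμ : [a] ∉ derivIter T μ := hμ.1 ▸ Set.notMem_empty _
  rw [singleton_mem_derivIter_iff ha] at haδ haμ
  push Not at haμ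
  obtain ⟨κ, hκμ, hκ⟩ := haμ
  obtain ⟨ρ, hρκ, hρ⟩ := exists_hasOrder hκ
  refine ⟨a, ha, ρ, ?_, hρκ.trans_lt hκμ, hρ⟩
  by_contra! hρδ
  exact (haδ ρ hρδ).ne_empty hρ.1

end Cones

section MinTree

theorem minTree_zero : minTree 0 = ∅ :=
  Ordinal.limitRecOn_zero ..

theorem mem_minTree_succ {ζ : Ordinal} {l : List Ordinal} :
    l ∈ minTree (Order.succ ζ) ↔ l = [Order.succ ζ] ∨ ∃ t ∈ minTree ζ, l = Order.succ ζ :: t := by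
  change l ∈ minTree (ζ + 1) ↔ _
  rw [minTree, Ordinal.limitRecOn_add_one]
  rfl

theorem mem_minTree_limit {ξ : Ordinal} (hξ : Order.IsSuccLimit ξ) {l : List Ordinal} :
    l ∈ minTree ξ ↔ ∃ ζ < ξ, l ∈ minTree (Order.succ ζ) := by
  rw [minTree, Ordinal.limitRecOn_limit _ _ _ _ hξ]
  simp only [Set.mem_iUnion, Subtype.exists, Set.mem_Iio, exists_prop]
  rfl

theorem isBTree_minTree (ξ : Ordinal) : IsBTree (minTree ξ) := by
  induction ξ using Ordinal.succ_limit_induction with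
  | zero => exact ⟨by simp [minTree_zero], by simp [minTree_zero]⟩
  | succ ξ ih =>
    refine ⟨fun h => ?_, fun s l hs hsl hl => ?_⟩
    · obtain h | ⟨t, -, h⟩ := mem_minTree_succ.1 h <;> exact List.cons_ne_nil _ _ h.symm
    rw [mem_minTree_succ] at hl ⊢
    obtain ⟨s', rfl, hs'⟩ : ∃ s', s = Order.succ ξ :: s' ∧ s' <+: l.tail := by
      obtain rfl | ⟨t, -, rfl⟩ := hl <;>
      · obtain rfl | h := List.prefix_cons_iff.1 hsl
        exacts [absurd rfl hs, h]
    obtain rfl | hs'ne := eq_or_ne s' []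
    · exact Or.inl rfl
    obtain rfl | ⟨t, ht, rfl⟩ := hl
    · exact absurd (List.prefix_nil.1 hs') hs'ne
    · exact Or.inr ⟨s', ih.2 hs'ne hs' ht, rfl⟩
  | limit ξ hξ ih =>
    refine ⟨fun h => ?_, fun s t hs hst ht => ?_⟩
    · obtain ⟨ζ, hζ, h⟩ := (mem_minTree_limit hξ).1 h
      exact (ih _ (hξ.succ_lt hζ)).1 h
    · obtain ⟨ζ, hζ, ht⟩ := (mem_minTree_limit hξ).1 ht
      exact (mem_minTree_limit hξ).2 ⟨ζ, hζ, (ih _ (hξ.succ_lt hζ)).2 hs hst ht⟩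

theorem cone_minTree_succ (ζ : Ordinal) :
    cone (minTree (Order.succ ζ)) (Order.succ ζ) = minTree ζ := by
  ext s
  change s ≠ [] ∧ _ ↔ _
  simp only [mem_minTree_succ, List.cons.injEq, true_and, exists_eq_right']
  exact ⟨fun ⟨hs, h⟩ => h.resolve_left hs, fun h => ⟨(isBTree_minTree ζ).ne_nil h, Or.inr h⟩⟩

theorem headI_of_mem_minTree_succ {ζ : Ordinal} {l : List Ordinal}
    (hl : l ∈ minTree (Order.succ ζ)) : l.headI = Order.succ ζ := by
  obtain rfl | ⟨t, -, rfl⟩ := mem_minTree_succ.1 hl <;> rfl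

theorem minTree_succ_subset {ξ ζ : Ordinal} (hξ : Order.IsSuccLimit ξ) (hζ : ζ < ξ) :
    minTree (Order.succ ζ) ⊆ minTree ξ :=
  fun _ hl => (mem_minTree_limit hξ).2 ⟨ζ, hζ, hl⟩

theorem mem_minTree_succ_pred_headI {ξ : Ordinal} (hξ : Order.IsSuccLimit ξ) {l : List Ordinal}
    (hl : l ∈ minTree ξ) : l.headI.pred < ξ ∧ l ∈ minTree (Order.succ l.headI.pred) := by
  obtain ⟨ζ, hζ, hlζ⟩ := (mem_minTree_limit hξ).1 hl
  rw [headI_of_mem_minTree_succ hlζ, Order.succ_eq_add_one, Ordinal.pred_add_one]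
  exact ⟨hζ, hlζ⟩

theorem maxElems_minTree_succ_subset {ξ ζ : Ordinal} (hξ : Order.IsSuccLimit ξ) (hζ : ζ < ξ) :
    maxElems (minTree (Order.succ ζ)) ⊆ maxElems (minTree ξ) := by
  refine fun l ⟨hl, hmax⟩ => ⟨minTree_succ_subset hξ hζ hl, ?_⟩
  rintro ⟨u, hu, hlu⟩
  obtain ⟨η, -, hu⟩ := (mem_minTree_limit hξ).1 hu
  have hl' := (isBTree_minTree _).2 ((isBTree_minTree _).ne_nil hl) hlu.1 hu
  have hηζ := headI_of_mem_minTree_succ hl'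
  rw [headI_of_mem_minTree_succ hl] at hηζ
  obtain rfl := Order.succ_injective hηζ
  exact hmax ⟨u, hu, hlu⟩

theorem mem_maxElems_minTree_of_cons {ξ : Ordinal} {t : List Ordinal} (ht : t ∈ minTree ξ)
    (h : Order.succ ξ :: t ∈ maxElems (minTree (Order.succ ξ))) : t ∈ maxElems (minTree ξ) := by
  rwa [cons_mem_maxElems_iff ((isBTree_minTree ξ).ne_nil ht), cone_minTree_succ] at h

end MinTree

section Maps

variable {α β γ : Type*}

structure IsExtOrderPreserving (V : Set (List α)) (T : Set (List β)) (i e : List α → List β) :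
    Prop where
  mem : ∀ t ∈ V, i t ∈ T
  properPrefix : ∀ s ∈ V, ∀ t ∈ V, ProperPrefix s t → ProperPrefix (i s) (i t)
  mem_maxElems : ∀ t ∈ maxElems V, e t ∈ maxElems T
  isPrefix : ∀ t ∈ maxElems V, i t <+: e t

namespace IsExtOrderPreserving

variable {V : Set (List α)} {U : Set (List β)} {W : Set (List γ)}

theorem of_subset {T : Set (List α)} (hVT : V ⊆ T) (hmax : maxElems V ⊆ maxElems T) :
    IsExtOrderPreserving V T id id :=
  ⟨hVT, fun _ _ _ _ h => h, hmax, fun _ _ => List.prefix_refl _⟩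

theorem isPrefix_of_isPrefix {i e : List α → List β} (h : IsExtOrderPreserving V U i e)
    {s t : List α} (hs : s ∈ V) (ht : t ∈ maxElems V) (hst : s <+: t) : i s <+: e t := by
  obtain rfl | hne := eq_or_ne s t
  · exact h.isPrefix s ht
  · exact (h.properPrefix s hs t ht.1 ⟨hst, hne⟩).1.trans (h.isPrefix t ht)

theorem comp {i e : List α → List β} {I E : List β → List γ} (h₁ : IsExtOrderPreserving V U i e)
    (h₂ : IsExtOrderPreserving U W I E) : IsExtOrderPreserving V W (I ∘ i) (E ∘ e) :=
  ⟨fun t ht => h₂.mem _ (h₁.mem t ht),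
    fun s hs t ht hst => h₂.properPrefix _ (h₁.mem s hs) _ (h₁.mem t ht)
      (h₁.properPrefix s hs t ht hst),
    fun t ht => h₂.mem_maxElems _ (h₁.mem_maxElems t ht),
    fun t ht => h₂.isPrefix_of_isPrefix (h₁.mem t ht.1) (h₁.mem_maxElems t ht) (h₁.isPrefix t ht)⟩

end IsExtOrderPreserving

theorem isExtOrderPreserving_cons {T A : Set (List α)} {a : α} (hA : A ⊆ cone T a)
    (hmax : maxElems A ⊆ maxElems (cone T a)) : IsExtOrderPreserving A T (a :: ·) (a :: ·) :=
  ⟨fun _ ht => (hA ht).2, fun _ _ _ _ h => properPrefix_cons_cons.2 h,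
    fun _ ht => (cons_mem_maxElems_iff (hA ht.1).1).2 (hmax ht), fun _ _ => List.prefix_refl _⟩

theorem exists_isExtOrderPreserving_minTree {ξ ρ : Ordinal} (h : ξ ≤ ρ) :
    ∃ f, IsExtOrderPreserving (minTree ξ) (minTree ρ) f f := by
  induction ρ using WellFoundedLT.induction generalizing ξ with | ind ρ ih =>
  obtain rfl | hlt := h.eq_or_lt
  · exact ⟨id, .of_subset subset_rfl subset_rfl⟩
  obtain rfl | ⟨η, rfl⟩ | hρ := Ordinal.zero_or_succ_or_isSuccLimit ρ
  · exact absurd hlt (not_lt_zero)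
  · obtain ⟨f, hf⟩ := ih η (Order.lt_succ η) (Order.lt_succ_iff.1 hlt)
    have hcone := cone_minTree_succ η
    exact ⟨_, hf.comp (isExtOrderPreserving_cons hcone.ge (by rw [hcone]))⟩
  · obtain ⟨f, hf⟩ := ih _ (hρ.succ_lt hlt) (Order.le_succ ξ)
    exact ⟨_, hf.comp (.of_subset (minTree_succ_subset hρ hlt)
      (maxElems_minTree_succ_subset hρ hlt))⟩

def IsMonochromatic (V : Set (List α)) (C : List β → Fin 2 → Set (List β)) (j : Fin 2)
    (i e : List α → List β) : Prop :=
  ∀ t ∈ maxElems V, ∀ s ∈ V, s <+: t → e t ∈ C (i s) j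

theorem IsMonochromatic.comp {V : Set (List α)} {W : Set (List β)} {f g : List α → List β}
    {C : List γ → Fin 2 → Set (List γ)} {j : Fin 2} {i e : List β → List γ}
    (hf : IsExtOrderPreserving V W f g) (h : IsMonochromatic W C j i e) :
    IsMonochromatic V C j (i ∘ f) (e ∘ g) :=
  fun t ht s hs hst =>
    h _ (hf.mem_maxElems t ht) _ (hf.mem s hs) (hf.isPrefix_of_isPrefix hs ht hst)

def IsColoring (T : Set (List α)) (C : List α → Fin 2 → Set (List α)) : Prop :=
  ∀ t ∈ T, ∀ m ∈ maxElems T, t <+: m → m ∈ C t 0 ∪ C t 1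

def colorPullback (I E : List α → List β) (C : List β → Fin 2 → Set (List β)) (t : List α)
    (j : Fin 2) : Set (List α) :=
  {m | E m ∈ C (I t) j}

theorem IsColoring.pullback {V : Set (List α)} {T : Set (List β)} {I E : List α → List β}
    {C : List β → Fin 2 → Set (List β)} (hC : IsColoring T C) (h : IsExtOrderPreserving V T I E) :
    IsColoring V (colorPullback I E C) :=
  fun t ht m hm htm => hC _ (h.mem t ht) _ (h.mem_maxElems m hm) (h.isPrefix_of_isPrefix ht hm htm)

end Maps

section MonoMaps

variable {S : Type*} {T : Set (List S)} {C : List S → Fin 2 → Set (List S)} {j : Fin 2}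

def HasMonoMap (T : Set (List S)) (C : List S → Fin 2 → Set (List S)) (j : Fin 2)
    (ξ : Ordinal) : Prop :=
  ∃ i e : List Ordinal → List S,
    IsExtOrderPreserving (minTree ξ) T i e ∧ IsMonochromatic (minTree ξ) C j i e

namespace HasMonoMap

theorem zero : HasMonoMap T C j 0 := by
  refine ⟨fun _ => [], fun _ => [], ⟨?_, ?_, ?_, ?_⟩, ?_⟩ <;>
    simp [IsMonochromatic, minTree_zero, maxElems]

theorem of_le {ξ ρ : Ordinal} (h : HasMonoMap T C j ρ) (hξ : ξ ≤ ρ) : HasMonoMap T C j ξ := by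
  obtain ⟨i, e, hie, hmono⟩ := h
  obtain ⟨f, hf⟩ := exists_isExtOrderPreserving_minTree hξ
  exact ⟨i ∘ f, e ∘ f, hf.comp hie, hmono.comp hf⟩

theorem pullback {α : Type*} {V : Set (List α)} {I E : List α → List S} {ξ : Ordinal}
    (h : HasMonoMap V (colorPullback I E C) j ξ) (hIE : IsExtOrderPreserving V T I E) :
    HasMonoMap T C j ξ := by
  obtain ⟨i, e, hie, hmono⟩ := h
  exact ⟨I ∘ i, E ∘ e, hie.comp hIE, hmono⟩

theorem of_isSuccLimit {ξ : Ordinal} (hξ : Order.IsSuccLimit ξ)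
    (h : ∀ ζ < ξ, HasMonoMap T C j (Order.succ ζ)) : HasMonoMap T C j ξ := by
  have h' : ∀ ζ, ∃ i e : List Ordinal → List S, ζ < ξ →
      IsExtOrderPreserving (minTree (Order.succ ζ)) T i e ∧
        IsMonochromatic (minTree (Order.succ ζ)) C j i e := by
    intro ζ
    by_cases hζ : ζ < ξ
    · obtain ⟨i, e, h⟩ := h ζ hζ
      exact ⟨i, e, fun _ => h⟩
    · exact ⟨fun _ => [], fun _ => [], fun h => absurd h hζ⟩
  choose i e hie using h'
  -- glue the maps along the components `𝒯_(ζ+1)` of `𝒯_ξ`; `ζ + 1` is read off the head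
  set c : List Ordinal → Ordinal := fun l => Ordinal.pred l.headI
  have hc : ∀ l ∈ minTree ξ, c l < ξ ∧ l ∈ minTree (Order.succ (c l)) :=
    fun l hl => mem_minTree_succ_pred_headI hξ hl
  have hpre : ∀ s ∈ minTree ξ, ∀ l, s <+: l → c s = c l :=
    fun s hs l hsl => by simp only [c, hsl.headI_eq ((isBTree_minTree ξ).ne_nil hs)]
  have hmax : ∀ l ∈ maxElems (minTree ξ), l ∈ maxElems (minTree (Order.succ (c l))) :=
    fun l hl => mem_maxElems_of_subset (minTree_succ_subset hξ (hc l hl.1).1) (hc l hl.1).2 hl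
  refine ⟨fun l => i (c l) l, fun l => e (c l) l, ⟨fun l hl => ?_, fun s hs l hl hsl => ?_,
    fun l hl => ?_, fun l hl => ?_⟩, fun l hl s hs hsl => ?_⟩
  · exact (hie _ (hc l hl).1).1.mem l (hc l hl).2
  · have hcs := hpre s hs l hsl.1
    simp only [hcs]
    exact (hie _ (hc l hl).1).1.properPrefix s (hcs ▸ (hc s hs).2) l (hc l hl).2 hsl
  · exact (hie _ (hc l hl.1).1).1.mem_maxElems l (hmax l hl)
  · exact (hie _ (hc l hl.1).1).1.isPrefix l (hmax l hl)
  · have hcs := hpre s hs l hsl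
    simp only [hcs]
    exact (hie _ (hc l hl.1).1).2 l (hmax l hl) s (hcs ▸ (hc s hs).2) hsl

theorem of_forall_lt {ξ : Ordinal} (h : ∀ ζ < ξ, ∃ ρ, ζ < ρ ∧ HasMonoMap T C j ρ) :
    HasMonoMap T C j ξ := by
  obtain rfl | ⟨η, rfl⟩ | hξ := Ordinal.zero_or_succ_or_isSuccLimit ξ
  · exact zero
  · obtain ⟨ρ, hρ, hmap⟩ := h η (Order.lt_succ η)
    exact hmap.of_le (Order.succ_le_of_lt hρ)
  · refine of_isSuccLimit hξ fun ζ hζ => ?_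
    obtain ⟨ρ, hρ, hmap⟩ := h ζ hζ
    exact hmap.of_le (Order.succ_le_of_lt hρ)

end HasMonoMap

def rootExtend {α β : Type*} (r : β) (f : List α → β) (l : List α) : β :=
  if l.tail = [] then r else f l.tail

theorem rootExtend_singleton {α β : Type*} (r : β) (f : List α → β) (a : α) :
    rootExtend r f [a] = r :=
  if_pos rfl

theorem rootExtend_cons {α β : Type*} (r : β) (f : List α → β) (a : α) {t : List α}
    (ht : t ≠ []) : rootExtend r f (a :: t) = f t :=
  if_neg ht

theorem isExtOrderPreserving_rootExtend {ξ : Ordinal} {r w : List S} (hr : r ∈ T)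
    (hw : w ∈ maxElems T) (hrw : r <+: w) {i e : List Ordinal → List S}
    (hie : IsExtOrderPreserving (minTree ξ) T i e) (hri : ∀ t ∈ minTree ξ, ProperPrefix r (i t)) :
    IsExtOrderPreserving (minTree (Order.succ ξ)) T (rootExtend r i) (rootExtend w e) := by
  have hne := fun {t} (ht : t ∈ minTree ξ) => (isBTree_minTree ξ).ne_nil ht
  refine ⟨fun l hl => ?_, fun s hs l hl hsl => ?_, fun l hl => ?_, fun l hl => ?_⟩
  · obtain rfl | ⟨t, ht, rfl⟩ := mem_minTree_succ.1 hl
    · rwa [rootExtend_singleton]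
    · rw [rootExtend_cons _ _ _ (hne ht)]
      exact hie.mem t ht
  · obtain rfl | ⟨t, ht, rfl⟩ := mem_minTree_succ.1 hl
    · have := hsl.length_lt
      simp only [List.length_singleton, Nat.lt_one_iff, List.length_eq_zero_iff] at this
      exact absurd this ((isBTree_minTree _).ne_nil hs)
    obtain rfl | ⟨s, hs', rfl⟩ := mem_minTree_succ.1 hs
    · rw [rootExtend_singleton, rootExtend_cons _ _ _ (hne ht)]
      exact hri t ht
    · rw [rootExtend_cons _ _ _ (hne hs'), rootExtend_cons _ _ _ (hne ht)]
      exact hie.properPrefix s hs' t ht (properPrefix_cons_cons.1 hsl)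
  · obtain h | ⟨t, ht, rfl⟩ := mem_minTree_succ.1 hl.1
    · rwa [h, rootExtend_singleton]
    · rw [rootExtend_cons _ _ _ (hne ht)]
      exact hie.mem_maxElems t (mem_maxElems_minTree_of_cons ht hl)
  · obtain h | ⟨t, ht, rfl⟩ := mem_minTree_succ.1 hl.1
    · rwa [h, rootExtend_singleton, rootExtend_singleton]
    · rw [rootExtend_cons _ _ _ (hne ht), rootExtend_cons _ _ _ (hne ht)]
      exact hie.isPrefix t (mem_maxElems_minTree_of_cons ht hl)

theorem isMonochromatic_rootExtend {ξ : Ordinal} {r w : List S} (hwC : w ∈ C r j)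
    {i e : List Ordinal → List S} (hmono : IsMonochromatic (minTree ξ) C j i e)
    (heC : ∀ t ∈ maxElems (minTree ξ), e t ∈ C r j) :
    IsMonochromatic (minTree (Order.succ ξ)) C j (rootExtend r i) (rootExtend w e) := by
  have hne := fun {t} (ht : t ∈ minTree ξ) => (isBTree_minTree ξ).ne_nil ht
  intro l hl s hs hsl
  obtain h | ⟨t, ht, rfl⟩ := mem_minTree_succ.1 hl.1
  · obtain rfl | ⟨s, hs', rfl⟩ := mem_minTree_succ.1 hs
    · rwa [h, rootExtend_singleton, rootExtend_singleton]
    · rw [h, List.cons_prefix_cons, List.prefix_nil] at hsl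
      exact absurd hsl.2 (hne hs')
  · rw [rootExtend_cons _ _ _ (hne ht)]
    obtain rfl | ⟨s, hs', rfl⟩ := mem_minTree_succ.1 hs
    · rw [rootExtend_singleton]
      exact heC t (mem_maxElems_minTree_of_cons ht hl)
    · rw [rootExtend_cons _ _ _ (hne hs')]
      exact hmono t (mem_maxElems_minTree_of_cons ht hl) s hs' (List.cons_prefix_cons.1 hsl).2

end MonoMaps

section Coloring

variable {S : Type*} {T : Set (List S)} {C : List S → Fin 2 → Set (List S)} {a : S}

def coloredCone (T : Set (List S)) (C : List S → Fin 2 → Set (List S)) (a : S) (j : Fin 2) :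
    Set (List S) :=
  {s ∈ cone T a | ∃ m ∈ maxElems (cone T a), s <+: m ∧ a :: m ∈ C [a] j}

theorem IsBTree.coloredCone (hT : IsBTree T) (j : Fin 2) : IsBTree (coloredCone T C a j) :=
  ⟨fun h => (hT.cone a).1 h.1, fun _ _ hs hst ⟨ht, m, hm, htm, hmC⟩ =>
    ⟨(hT.cone a).2 hs hst ht, m, hm, hst.trans htm, hmC⟩⟩

theorem mem_maxElems_coloredCone {j : Fin 2} {m : List S}
    (h : m ∈ maxElems (coloredCone T C a j)) : m ∈ maxElems (cone T a) ∧ a :: m ∈ C [a] j := by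
  obtain ⟨⟨-, m', hm', hmm', hm'C⟩, hmax⟩ := h
  obtain rfl | hne := eq_or_ne m m'
  · exact ⟨hm', hm'C⟩
  · exact absurd ⟨m', ⟨hm'.1, m', hm', List.prefix_refl m', hm'C⟩, hmm', hne⟩ hmax

theorem coloredCone_union (hC : IsColoring T C) (ha : [a] ∈ T) {ρ : Ordinal}
    (hρ : derivIter (cone T a) ρ = ∅) : coloredCone T C a 0 ∪ coloredCone T C a 1 = cone T a := by
  refine (Set.union_subset (Set.sep_subset _ _) (Set.sep_subset _ _)).antisymm fun s hs => ?_
  obtain ⟨m, hm, hsm⟩ := exists_maxElems_prefix hρ hs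
  obtain h | h := hC [a] ha (a :: m) ((cons_mem_maxElems_iff hm.1.1).2 hm)
    (List.cons_prefix_cons.2 ⟨rfl, List.nil_prefix⟩)
  exacts [Or.inl ⟨hs, m, hm, hsm, h⟩, Or.inr ⟨hs, m, hm, hsm, h⟩]

/-- The branch `w` is the image of the root of `𝒯_1` when the map of colour `j` has height `0`. -/
theorem exists_hasOrder_coloredCone (hT : IsBTree T) (hC : IsColoring T C) (ha : [a] ∈ T)
    {ρ : Ordinal} (hρ : hasOrder (cone T a) ρ) :
    ∃ j, hasOrder (coloredCone T C a j) ρ ∧ ∃ w ∈ maxElems T, [a] <+: w ∧ w ∈ C [a] j := by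
  obtain rfl | hρ0 := eq_zero_or_pos ρ
  · have hcone : cone T a = ∅ := by rw [← hρ.1, derivIter_zero]
    have hmax : [a] ∈ maxElems T :=
      ⟨ha, by rw [exists_singleton_properPrefix_iff, hcone]; exact Set.not_nonempty_empty⟩
    have hord : ∀ j, hasOrder (coloredCone T C a j) 0 := fun j =>
      ⟨by rw [derivIter_zero]; exact Set.subset_eq_empty (Set.sep_subset _ _) hcone,
        fun ζ hζ => absurd hζ (not_lt_zero)⟩
    obtain h | h := hC [a] ha [a] hmax (List.prefix_refl _)
    exacts [⟨0, hord 0, [a], hmax, List.prefix_refl _, h⟩,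
      ⟨1, hord 1, [a], hmax, List.prefix_refl _, h⟩]
  obtain ⟨j, hj⟩ : ∃ j, hasOrder (coloredCone T C a j) ρ :=
    (hasOrder_or_of_union (hT.coloredCone 0) (hT.coloredCone 1)
      ((coloredCone_union hC ha hρ.1).symm ▸ hρ)).elim (⟨0, ·⟩) (⟨1, ·⟩)
  obtain ⟨s, -, m, hm, -, hmC⟩ := Set.nonempty_iff_ne_empty.2 (derivIter_zero _ ▸ hj.2 0 hρ0)
  exact ⟨j, hj, a :: m, (cons_mem_maxElems_iff hm.1.1).2 hm,
    List.cons_prefix_cons.2 ⟨rfl, List.nil_prefix⟩, hmC⟩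

theorem exists_hasMonoMap_of_cone (hT : IsBTree T) (hC : IsColoring T C) (ha : [a] ∈ T)
    {ρ : Ordinal} (hρ : hasOrder (cone T a) ρ)
    (ih : ∀ A : Set (List S), IsBTree A → hasOrder A ρ → ∀ D, IsColoring A D →
      ∃ x : Fin 2 → Ordinal, x 0 ♯ x 1 = ρ ∧ ∀ j, HasMonoMap A D j (x j)) :
    ∃ x : Fin 2 → Ordinal, x 0 ♯ x 1 = Order.succ ρ ∧ ∀ j, HasMonoMap T C j (x j) := by
  obtain ⟨j₀, hA, w, hw, haw, hwC⟩ := exists_hasOrder_coloredCone hT hC ha hρ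
  set A := coloredCone T C a j₀
  have hAT : IsExtOrderPreserving A T (a :: ·) (a :: ·) :=
    isExtOrderPreserving_cons (Set.sep_subset _ _) fun m hm => (mem_maxElems_coloredCone hm).1
  obtain ⟨y, hy, hyA⟩ := ih A (hT.coloredCone j₀) hA _ (hC.pullback hAT)
  refine ⟨Function.update y j₀ (Order.succ (y j₀)), ?_, fun j => ?_⟩
  · fin_cases j₀ <;> simp [Ordinal.succ_nadd, Ordinal.nadd_succ, hy, -Order.succ_eq_add_one]
  obtain rfl | hj := eq_or_ne j j₀
  · obtain ⟨i, e, hie, hmono⟩ := hyA j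
    rw [Function.update_self]
    refine ⟨_, _, isExtOrderPreserving_rootExtend ha hw haw (hie.comp hAT) fun t ht => ?_,
      isMonochromatic_rootExtend hwC hmono fun t ht => ?_⟩
    · exact properPrefix_cons_cons.2 (nil_properPrefix_iff.2 (hie.mem t ht).1.1)
    · exact (mem_maxElems_coloredCone (hie.mem_maxElems t ht)).2
  · rw [Function.update_of_ne hj]
    exact (hyA j).pullback hAT

theorem exists_nadd_eq_hasMonoMap (μ : Ordinal) (T : Set (List S)) (hT : IsBTree T)
    (hμ : hasOrder T μ) (C : List S → Fin 2 → Set (List S)) (hC : IsColoring T C) :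
    ∃ x : Fin 2 → Ordinal, x 0 ♯ x 1 = μ ∧ ∀ j, HasMonoMap T C j (x j) := by
  induction μ using WellFoundedLT.induction generalizing T C with | ind μ ih =>
  refine Ordinal.exists_nadd_eq_of_forall_lt (fun _ _ => HasMonoMap.of_forall_lt) fun δ hδ => ?_
  obtain ⟨a, ha, ρ, hδρ, hρμ, hρ⟩ := exists_root_hasOrder_cone hT hμ hδ
  obtain ⟨x, hx, hxT⟩ := exists_hasMonoMap_of_cone hT hC ha hρ (ih ρ hρμ)
  exact ⟨x, hxT, hx ▸ Order.lt_succ_of_le hδρ, hx ▸ Order.succ_le_of_lt hρμ⟩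

end Coloring

/-- Coloring sums: for any coloring of a well-founded `B`-tree `T` of order `μ`,
there are ordinals `ξ_0 ⊕ ξ_1 = μ` and, for each `j`, an extended order preserving
map of `𝒯_{ξ_j}` into `T` whose induced coloring is monochromatically `j`. -/
theorem coloring_sums {S : Type*} (T : Set (List S)) (hT : IsBTree T)
    (μ : Ordinal) (hμ : hasOrder T μ)
    (C : List S → Fin 2 → Set (List S))
    (hC : ∀ t ∈ T, {s : List S | s ∈ maxElems T ∧ t <+: s} = C t 0 ∪ C t 1) :
    ∃ x : Fin 2 → Ordinal, x 0 ♯ x 1 = μ ∧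
      ∀ j : Fin 2, ∃ i e : List Ordinal → List S,
        (∀ t ∈ minTree (x j), i t ∈ T) ∧
        (∀ s ∈ minTree (x j), ∀ t ∈ minTree (x j),
          ProperPrefix s t → ProperPrefix (i s) (i t)) ∧
        (∀ t ∈ maxElems (minTree (x j)),
          e t ∈ maxElems T ∧ i t <+: e t ∧
          ∀ k < t.length, e t ∈ C (i (t.take (k + 1))) j) := by
  have hcol : IsColoring T C := fun t ht m hm htm => hC t ht ▸ ⟨hm, htm⟩
  obtain ⟨x, hx, hmap⟩ := exists_nadd_eq_hasMonoMap μ T hT hμ C hcol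
  refine ⟨x, hx, fun j => ?_⟩
  obtain ⟨i, e, hie, hmono⟩ := hmap j
  refine ⟨i, e, hie.mem, hie.properPrefix, fun t ht => ⟨hie.mem_maxElems t ht, hie.isPrefix t ht,
    fun k _ => hmono t ht _ ?_ (List.take_prefix _ _)⟩⟩
  have htake : t.take (k + 1) ≠ [] := by simp [(isBTree_minTree _).ne_nil ht.1]
  exact (isBTree_minTree _).2 htake (List.take_prefix _ _) ht.1
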